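/- Let G be a group and x, y : ℝ → G be group homomorphisms from the additive group of reals, such that for all a, b ∈ ℝ the commutator relation x(a)y(b)x(a)⁻¹y(b)⁻¹ = z(γ·a·b) holds, where γ ∈ ℝ and z : ℝ → G is a homomorphism whose image commutes with the images of x and y. Then for all a, b, c ∈ ℝ with a + c ≠ 0: x(a)·y(b)·x(c) = y(bc/(a+c))·x(a+c)·y(ab/(a+c)). -/

import Mathlib

/-! Pushing `x a` to the right past `y b` produces the central factor `z (γ a b)`. Split
`b = b₁ + b₂` with `c b₂ = a b₁`; then `γ a b = γ (a + c) b₂`, so the same central factor is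
absorbed when `x (a + c)` is pulled back past `y b₂`. -/

open scoped commutatorElement

theorem mul_eq_commutatorElement_mul_mul {G : Type*} [Group G] (g h : G) :
    g * h = ⁅g, h⁆ * (h * g) := by
  rw [commutatorElement_def]; group

section RootSubgroups

variable {G : Type*} [Group G] {x y z : ℝ → G} {γ : ℝ}

theorem mul_eq_central_mul_mul_swap
    (hcomm : ∀ a b : ℝ, x a * y b * (x a)⁻¹ * (y b)⁻¹ = z (γ * a * b)) (a b : ℝ) :
    x a * y b = z (γ * a * b) * (y b * x a) := by
  rw [mul_eq_commutatorElement_mul_mul, commutatorElement_def, hcomm]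

theorem braid_of_mul_eq_mul
    (hx : ∀ a b : ℝ, x (a + b) = x a * x b)
    (hy : ∀ a b : ℝ, y (a + b) = y a * y b)
    (hcomm : ∀ a b : ℝ, x a * y b * (x a)⁻¹ * (y b)⁻¹ = z (γ * a * b))
    (hzy : ∀ a b : ℝ, z a * y b = y b * z a)
    {a b₁ b₂ c : ℝ} (h : c * b₂ = a * b₁) :
    x a * y (b₁ + b₂) * x c = y b₁ * x (a + c) * y b₂ := by
  have hcentral : γ * a * (b₁ + b₂) = γ * (a + c) * b₂ := by linear_combination -γ * h
  calc x a * y (b₁ + b₂) * x c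
      = z (γ * (a + c) * b₂) * (y b₁ * y b₂) * (x a * x c) := by
        rw [mul_eq_central_mul_mul_swap hcomm, hcentral, hy]; group
    _ = y b₁ * (z (γ * (a + c) * b₂) * (y b₂ * x (a + c))) := by
        rw [← hx, ← mul_assoc (z _), hzy]; group
    _ = y b₁ * x (a + c) * y b₂ := by
        rw [← mul_eq_central_mul_mul_swap hcomm, mul_assoc]

end RootSubgroups

theorem stmt_1_general {G : Type*} [Group G] (x y z : ℝ → G) (γ : ℝ)
    (hx : ∀ a b : ℝ, x (a + b) = x a * x b)
    (hy : ∀ a b : ℝ, y (a + b) = y a * y b)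
    (hcomm : ∀ a b : ℝ, x a * y b * (x a)⁻¹ * (y b)⁻¹ = z (γ * a * b))
    (hzy : ∀ a b : ℝ, z a * y b = y b * z a) :
    ∀ a b c : ℝ, a + c ≠ 0 →
      x a * y b * x c =
        y (b * c / (a + c)) * x (a + c) * y (a * b / (a + c)) := by
  intro a b c hs
  have hsplit : b = b * c / (a + c) + a * b / (a + c) := by field_simp; ring
  have hbalance : c * (a * b / (a + c)) = a * (b * c / (a + c)) := by field_simp
  conv_lhs => rw [hsplit]
  exact braid_of_mul_eq_mul hx hy hcomm hzy hbalance

theorem stmt_1 {G : Type*} [Group G] (x y z : ℝ → G) (γ : ℝ)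
    (hx : ∀ a b : ℝ, x (a + b) = x a * x b)
    (hy : ∀ a b : ℝ, y (a + b) = y a * y b)
    (hz : ∀ a b : ℝ, z (a + b) = z a * z b)
    (hcomm : ∀ a b : ℝ, x a * y b * (x a)⁻¹ * (y b)⁻¹ = z (γ * a * b))
    (hzx : ∀ a b : ℝ, z a * x b = x b * z a)
    (hzy : ∀ a b : ℝ, z a * y b = y b * z a) :
    ∀ a b c : ℝ, a + c ≠ 0 →
      x a * y b * x c =
        y (b * c / (a + c)) * x (a + c) * y (a * b / (a + c)) :=
  stmt_1_general x y z γ hx hy hcomm hzy
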